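/- arXiv:1503.03648 — 2 statements merged into one kernel-verified Lean document; each statement's English description precedes it below -/
import Mathlib

section
/- Let 0 < ρ < 1 and let u : Ā_ρ → ℂ be continuously differentiable on the closed annulus with |u(z)| = 1 for all z ∈ ∂A_ρ; set p = deg(u, C₁) and q = deg(u, C_ρ). Then the Dirichlet energy satisfies E(u) ≥ π|p − q|. Moreover, if u is holomorphic on A_ρ then E(u) = π(p − q); conversely, if p ≥ q and E(u) = π(p − q), then u is holomorphic on A_ρ. -/
open Complex MeasureTheory

noncomputable section

/-- Partial derivative in the `x`-direction (as a function of `z = x + iy`). -/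
def pdx (u : ℂ → ℂ) (z : ℂ) : ℂ := fderiv ℝ u z 1

/-- Partial derivative in the `y`-direction. -/
def pdy (u : ℂ → ℂ) (z : ℂ) : ℂ := fderiv ℝ u z Complex.I

/-- Wirtinger derivative `∂_z u = (1/2)(∂ₓu − i ∂_y u)`. -/
def wirt (u : ℂ → ℂ) (z : ℂ) : ℂ := (1 / 2) * (pdx u z - Complex.I * pdy u z)

/-- Hopf differential coefficient `H_u(z) = ∂_z u · ∂_z ū`. -/
def hopf (u : ℂ → ℂ) (z : ℂ) : ℂ :=
  wirt u z * wirt (fun w => (starRingEnd ℂ) (u w)) z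

/-- Open annulus `A_ρ = {ρ < |z| < 1}`. -/
def ann (ρ : ℝ) : Set ℂ := {z : ℂ | ρ < ‖z‖ ∧ ‖z‖ < 1}

/-- Closed annulus `Ā_ρ = {ρ ≤ |z| ≤ 1}`. -/
def cann (ρ : ℝ) : Set ℂ := {z : ℂ | ρ ≤ ‖z‖ ∧ ‖z‖ ≤ 1}

/-- Boundary `∂A_ρ`, the union of the circles `|z| = 1` and `|z| = ρ`. -/
def bdry (ρ : ℝ) : Set ℂ := {z : ℂ | ‖z‖ = 1 ∨ ‖z‖ = ρ}

/-- Wedge product `a ∧ b = Re a · Im b − Im a · Re b`. -/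
def wedge (a b : ℂ) : ℝ := a.re * b.im - a.im * b.re

/-- Radial derivative `∂_r u(z)`, the directional derivative in direction `z/|z|`. -/
def rderiv (u : ℂ → ℂ) (z : ℂ) : ℂ := fderiv ℝ u z (z / (‖z‖ : ℂ))

/-- Degree of `u` on the circle `|z| = r`:
`deg(u, C_r) = (1/2π) ∫₀^{2π} u(re^{iθ}) ∧ ∂_θ[u(re^{iθ})] dθ`. -/
def degCirc (u : ℂ → ℂ) (r : ℝ) : ℝ :=
  (1 / (2 * Real.pi)) * ∫ θ in (0:ℝ)..(2 * Real.pi),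
    wedge (u ((r : ℂ) * Complex.exp (Complex.I * θ)))
      (deriv (fun t : ℝ => u ((r : ℂ) * Complex.exp (Complex.I * t))) θ)

/-- Dirichlet energy `E(u) = (1/2) ∫_{A_ρ} (|∂ₓu|² + |∂_y u|²)`. -/
def energy (ρ : ℝ) (u : ℂ → ℂ) : ℝ :=
  (1 / 2) * ∫ z in ann ρ, (‖pdx u z‖ ^ 2 + ‖pdy u z‖ ^ 2)

end

/-!
The Jacobian `J = ∂ₓu ∧ ∂_y u` controls the energy from both sides: pointwise
`|∂ₓu|² + |∂_y u|² = |∂ₓu + i ∂_y u|² + 2J = |∂ₓu - i ∂_y u|² - 2J`, hence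
`E(u) = ±∫J + ½∫|∂ₓu ± i ∂_y u|² ≥ |∫J|`, and `E(u) = ∫J` exactly when the Cauchy-Riemann
expression `∂ₓu + i ∂_y u` vanishes on `A_ρ`, i.e. when `u` is holomorphic there.

It remains to show `∫_{A_ρ} J = π (p - q)`: Stokes' theorem for the 1-form `u ∧ du`, whose
exterior derivative is `2J dx ∧ dy`. Since `u` is only `C¹`, this is done in polar coordinates.
The winding integral `ψ(r) = ∫₀^{2π} u ∧ ∂_θ u dθ = 2π deg(u, C_r)` has derivative
`2 ∫₀^{2π} r J(re^{iθ}) dθ`: an integration by parts in `θ` writes `ψ(s) - ψ(r)` through first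
derivatives of `u` only, and the difference quotients then converge by dominated convergence.
-/

open Set Filter Topology Metric intervalIntegral
open scoped Real ComplexConjugate

section Wedge

lemma wedge_eq_im_conj_mul (a b : ℂ) : wedge a b = (conj a * b).im := by
  simp only [wedge, mul_im, conj_re, conj_im]; ring

lemma abs_wedge_le (a b : ℂ) : |wedge a b| ≤ ‖a‖ * ‖b‖ := by
  simpa [wedge_eq_im_conj_mul] using abs_im_le_norm (conj a * b)

@[fun_prop]
lemma Continuous.wedge {X : Type*} [TopologicalSpace X] {f g : X → ℂ} (hf : Continuous f)
    (hg : Continuous g) : Continuous fun x => wedge (f x) (g x) := by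
  unfold _root_.wedge; fun_prop

@[fun_prop]
lemma ContinuousOn.wedge {X : Type*} [TopologicalSpace X] {f g : X → ℂ} {s : Set X}
    (hf : ContinuousOn f s) (hg : ContinuousOn g s) :
    ContinuousOn (fun x => wedge (f x) (g x)) s := by
  unfold _root_.wedge; fun_prop

lemma Filter.Tendsto.wedge {α : Type*} {l : Filter α} {f g : α → ℂ} {a b : ℂ}
    (hf : Tendsto f l (𝓝 a)) (hg : Tendsto g l (𝓝 b)) :
    Tendsto (fun x => wedge (f x) (g x)) l (𝓝 (wedge a b)) :=
  (((continuous_re.tendsto _).comp hf).mul ((continuous_im.tendsto _).comp hg)).sub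
    (((continuous_im.tendsto _).comp hf).mul ((continuous_re.tendsto _).comp hg))

lemma HasDerivAt.wedge {f g : ℝ → ℂ} {f' g' : ℂ} {t : ℝ} (hf : HasDerivAt f f' t)
    (hg : HasDerivAt g g' t) :
    HasDerivAt (fun s => wedge (f s) (g s)) (wedge f' (g t) + wedge (f t) g') t := by
  have hre {h : ℝ → ℂ} {h' : ℂ} (hh : HasDerivAt h h' t) : HasDerivAt (fun s => (h s).re) h'.re t :=
    reCLM.hasFDerivAt.comp_hasDerivAt t hh
  have him {h : ℝ → ℂ} {h' : ℂ} (hh : HasDerivAt h h' t) : HasDerivAt (fun s => (h s).im) h'.im t :=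
    imCLM.hasFDerivAt.comp_hasDerivAt t hh
  unfold _root_.wedge
  exact (((hre hf).mul (him hg)).sub ((him hf).mul (hre hg))).congr_deriv (by ring)

lemma wedge_map_map (L : ℂ →L[ℝ] ℂ) (a b : ℂ) :
    wedge (L a) (L b) = wedge a b * wedge (L 1) (L I) := by
  have hL : ∀ w : ℂ, L w = w.re • L 1 + w.im • L I := fun w => by
    rw [← map_smul, ← map_smul, ← map_add, real_smul, real_smul, mul_one, re_add_im]
  simp only [hL a, hL b, _root_.wedge, add_re, add_im, smul_re, smul_im, smul_eq_mul]
  ring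

lemma sq_norm_add_sq_norm_eq_add_wedge (a b : ℂ) :
    ‖a‖ ^ 2 + ‖b‖ ^ 2 = ‖a + I * b‖ ^ 2 + 2 * wedge a b := by
  simp only [Complex.sq_norm, normSq_apply, _root_.wedge, add_re, add_im, mul_re, mul_im, I_re,
    I_im]
  ring

lemma sq_norm_add_sq_norm_eq_sub_wedge (a b : ℂ) :
    ‖a‖ ^ 2 + ‖b‖ ^ 2 = ‖a - I * b‖ ^ 2 - 2 * wedge a b := by
  simp only [Complex.sq_norm, normSq_apply, _root_.wedge, sub_re, sub_im, mul_re, mul_im, I_re,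
    I_im]
  ring

end Wedge

section Annulus

variable {ρ : ℝ}

lemma isOpen_ann : IsOpen (ann ρ) :=
  (isOpen_lt continuous_const continuous_norm).inter (isOpen_lt continuous_norm continuous_const)

lemma ann_subset_cann : ann ρ ⊆ cann ρ := fun _ hz => ⟨hz.1.le, hz.2.le⟩

lemma cann_mem_nhds {z : ℂ} (hz : z ∈ ann ρ) : cann ρ ∈ 𝓝 z :=
  mem_of_superset (isOpen_ann.mem_nhds hz) ann_subset_cann

lemma isCompact_cann : IsCompact (cann ρ) :=
  (isCompact_closedBall (0 : ℂ) 1).of_isClosed_subset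
    ((isClosed_le continuous_const continuous_norm).inter
      (isClosed_le continuous_norm continuous_const))
    fun _ hz => mem_closedBall_zero_iff.2 hz.2

lemma ContinuousOn.integrableOn_ann {E : Type*} [NormedAddCommGroup E] {f : ℂ → E}
    (hf : ContinuousOn f (cann ρ)) : IntegrableOn f (ann ρ) :=
  (hf.integrableOn_compact isCompact_cann).mono_set ann_subset_cann

/-- Near `z`, the closed annulus contains the convex set cut out of the unit disc by the half-plane
bounded by the tangent to the inner circle at `ρ z / ‖z‖`. -/
lemma uniqueDiffOn_cann (hρ0 : 0 < ρ) (hρ1 : ρ < 1) : UniqueDiffOn ℝ (cann ρ) := by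
  intro z hz
  have hz0 : 0 < ‖z‖ := hρ0.trans_le hz.1
  set S := closedBall (0 : ℂ) 1 ∩ {w | ρ * ‖z‖ ≤ inner ℝ z w}
  have hS : S ⊆ cann ρ := fun w ⟨hw1, hw2⟩ =>
    ⟨le_of_mul_le_mul_right ((hw2.trans (real_inner_le_norm z w)).trans_eq (mul_comm _ _)) hz0,
      mem_closedBall_zero_iff.1 hw1⟩
  have hzS : z ∈ S := ⟨mem_closedBall_zero_iff.2 hz.2, show ρ * ‖z‖ ≤ inner ℝ z z by
    rw [real_inner_self_eq_norm_mul_norm]; exact mul_le_mul_of_nonneg_right hz.1 hz0.le⟩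
  have hint : (interior S).Nonempty := by
    set T := ball (0 : ℂ) 1 ∩ {w | ρ * ‖z‖ < inner ℝ z w}
    have hTS : T ⊆ S :=
      inter_subset_inter ball_subset_closedBall fun _ hw => le_of_lt (a := ρ * ‖z‖) hw
    have hT : IsOpen T := isOpen_ball.inter (isOpen_lt continuous_const (by fun_prop))
    refine (Nonempty.mono (hT.subset_interior_iff.2 hTS)) ⟨(‖z‖⁻¹ * ((1 + ρ) / 2)) • z, ?_, ?_⟩
    · rw [mem_ball_zero_iff, norm_smul, Real.norm_of_nonneg (by positivity)]
      field_simp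
      linarith
    · change ρ * ‖z‖ < inner ℝ z ((‖z‖⁻¹ * ((1 + ρ) / 2)) • z)
      rw [real_inner_smul_right, real_inner_self_eq_norm_mul_norm]
      field_simp
      nlinarith
  exact (uniqueDiffWithinAt_convex ((convex_closedBall _ _).inter
    (convex_halfSpace_ge (innerₛₗ ℝ z).isLinear _)) hint (subset_closure hzS)).mono hS

lemma circleMap_mem_cann (hρ0 : 0 ≤ ρ) {r : ℝ} (hr : r ∈ Icc ρ 1) (θ : ℝ) :
    circleMap 0 r θ ∈ cann ρ := by
  simpa [cann, abs_of_nonneg (hρ0.trans hr.1)] using hr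

end Annulus

lemma IsOpen.eqOn_zero_of_setIntegral_eq_zero {X : Type*} [TopologicalSpace X] [MeasurableSpace X]
    [OpensMeasurableSpace X] {μ : Measure X} [μ.IsOpenPosMeasure] {U : Set X} {f : X → ℝ}
    (hU : IsOpen U) (hf : ContinuousOn f U) (hfi : IntegrableOn f U μ) (hnn : ∀ x ∈ U, 0 ≤ f x)
    (h : ∫ x in U, f x ∂μ = 0) : EqOn f 0 U :=
  Measure.eqOn_open_of_ae_eq ((setIntegral_eq_zero_iff_of_nonneg_ae
    (ae_restrict_of_forall_mem hU.measurableSet hnn) hfi).1 h) hU hf continuousOn_const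

lemma hasDerivAt_circleMap_zero_radius (r θ : ℝ) :
    HasDerivAt (fun s : ℝ => circleMap 0 s θ) (circleMap 0 1 θ) r := by
  simpa [circleMap_zero] using (ofRealCLM.hasDerivAt (x := r)).mul_const (exp (θ * I))

lemma polarCoord_symm_eq_circleMap (p : ℝ × ℝ) :
    Complex.polarCoord.symm p = circleMap 0 p.1 p.2 := by
  rw [Complex.polarCoord_symm_apply, circleMap_zero, exp_mul_I, ← ofReal_cos, ← ofReal_sin]

lemma setIntegral_ann_eq_integral_polar {ρ : ℝ} (hρ0 : 0 ≤ ρ) (hρ1 : ρ ≤ 1) {f : ℂ → ℝ}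
    (hf : ContinuousOn f (cann ρ)) :
    ∫ z in ann ρ, f z = ∫ r in ρ..1, ∫ θ in 0..2 * π, r * f (circleMap 0 r θ) := by
  set box := Ioo ρ 1 ×ˢ Ioo (-π) π
  have hbox : box ⊆ polarCoord.target := fun p hp =>
    ⟨hρ0.trans_lt hp.1.1, hp.2⟩
  have hann : ∀ p ∈ polarCoord.target, circleMap 0 p.1 p.2 ∈ ann ρ ↔ p ∈ box := by
    rintro ⟨r, θ⟩ ⟨hr, hθ⟩
    simp_all [ann, box, abs_of_pos (show 0 < r from hr)]
  have hint : IntegrableOn (fun p : ℝ × ℝ => p.1 * f (circleMap 0 p.1 p.2)) box := by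
    refine ContinuousOn.integrableOn_compact (isCompact_Icc.prod isCompact_Icc) ?_ |>.mono_set
      (prod_mono Ioo_subset_Icc_self Ioo_subset_Icc_self)
    exact continuousOn_fst.mul
      (hf.comp (by fun_prop) fun p hp => circleMap_mem_cann hρ0 hp.1 p.2)
  calc ∫ z in ann ρ, f z
      = ∫ p in polarCoord.target, p.1 • (ann ρ).indicator f (circleMap 0 p.1 p.2) := by
        rw [← MeasureTheory.integral_indicator isOpen_ann.measurableSet,
          ← Complex.integral_comp_polarCoord_symm]
        simp_rw [polarCoord_symm_eq_circleMap]
    _ = ∫ p in polarCoord.target,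
          box.indicator (fun p : ℝ × ℝ => p.1 * f (circleMap 0 p.1 p.2)) p :=
        setIntegral_congr_fun polarCoord.open_target.measurableSet fun p hp => by
          simp [indicator, hann p hp]
    _ = ∫ p in box, p.1 * f (circleMap 0 p.1 p.2) := by
        rw [setIntegral_indicator (measurableSet_Ioo.prod measurableSet_Ioo),
          inter_eq_right.2 hbox]
    _ = ∫ r in Ioo ρ 1, ∫ θ in Ioo (-π) π, r * f (circleMap 0 r θ) := by
        rw [Measure.volume_eq_prod, setIntegral_prod _ hint]
    _ = ∫ r in ρ..1, ∫ θ in 0..2 * π, r * f (circleMap 0 r θ) := by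
        rw [integral_of_le hρ1, integral_Ioc_eq_integral_Ioo]
        refine setIntegral_congr_fun measurableSet_Ioo fun r _ => ?_
        have := ((periodic_circleMap 0 r).comp fun z => r * f z).intervalIntegral_add_eq (-π) 0
        rw [← integral_Ioc_eq_integral_Ioo, ← integral_of_le (by linarith [Real.pi_pos])]
        simpa [show -π + 2 * π = π by ring] using this

/-- `∂_θ` of `u` at `r e^{iθ}`, taken within the closed annulus so that it makes sense on the
boundary circles. -/
noncomputable def angularDeriv (ρ : ℝ) (u : ℂ → ℂ) (r θ : ℝ) : ℂ :=
  fderivWithin ℝ u (cann ρ) (circleMap 0 r θ) (circleMap 0 r θ * I)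

noncomputable def radialDeriv (ρ : ℝ) (u : ℂ → ℂ) (r θ : ℝ) : ℂ :=
  fderivWithin ℝ u (cann ρ) (circleMap 0 r θ) (circleMap 0 1 θ)

noncomputable def jacobian (ρ : ℝ) (u : ℂ → ℂ) (z : ℂ) : ℝ :=
  wedge (fderivWithin ℝ u (cann ρ) z 1) (fderivWithin ℝ u (cann ρ) z I)

noncomputable def windingIntegral (ρ : ℝ) (u : ℂ → ℂ) (r : ℝ) : ℝ :=
  ∫ θ in 0..2 * π, wedge (u (circleMap 0 r θ)) (angularDeriv ρ u r θ)

section ClosedAnnulus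

variable {ρ r s θ : ℝ} {u : ℂ → ℂ}

lemma continuousOn_fderivWithin_cann (hρ0 : 0 < ρ) (hρ1 : ρ < 1)
    (hreg : ContDiffOn ℝ 1 u (cann ρ)) : ContinuousOn (fderivWithin ℝ u (cann ρ)) (cann ρ) :=
  hreg.continuousOn_fderivWithin (uniqueDiffOn_cann hρ0 hρ1) le_rfl

lemma ContinuousOn.comp_circleMap {E : Type*} [TopologicalSpace E] {g : ℂ → E} (hρ0 : 0 ≤ ρ)
    (hg : ContinuousOn g (cann ρ)) :
    ContinuousOn (fun p : ℝ × ℝ => g (circleMap 0 p.1 p.2)) (Icc ρ 1 ×ˢ univ) :=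
  hg.comp (by fun_prop) fun p hp => circleMap_mem_cann hρ0 hp.1 p.2

lemma continuousOn_angularDeriv (hρ0 : 0 < ρ) (hρ1 : ρ < 1) (hreg : ContDiffOn ℝ 1 u (cann ρ)) :
    ContinuousOn (fun p : ℝ × ℝ => angularDeriv ρ u p.1 p.2) (Icc ρ 1 ×ˢ univ) :=
  ((continuousOn_fderivWithin_cann hρ0 hρ1 hreg).comp_circleMap hρ0.le).clm_apply (by fun_prop)

lemma norm_angularDeriv_le (hρ0 : 0 ≤ ρ) (hr : r ∈ Icc ρ 1) :
    ‖angularDeriv ρ u r θ‖ ≤ ‖fderivWithin ℝ u (cann ρ) (circleMap 0 r θ)‖ :=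
  (ContinuousLinearMap.le_opNorm _ _).trans (mul_le_of_le_one_right (norm_nonneg _)
    (by simpa [abs_of_nonneg (hρ0.trans hr.1)] using hr.2))

lemma norm_radialDeriv_le :
    ‖radialDeriv ρ u r θ‖ ≤ ‖fderivWithin ℝ u (cann ρ) (circleMap 0 r θ)‖ :=
  (ContinuousLinearMap.le_opNorm _ _).trans (by simp)

lemma hasDerivAt_angular (hρ0 : 0 ≤ ρ) (hdiff : DifferentiableOn ℝ u (cann ρ)) (hr : r ∈ Icc ρ 1)
    (θ : ℝ) : HasDerivAt (fun t => u (circleMap 0 r t)) (angularDeriv ρ u r θ) θ := by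
  refine hasDerivWithinAt_univ.1 ?_
  exact (hdiff _ (circleMap_mem_cann hρ0 hr θ)).hasFDerivWithinAt.comp_hasDerivWithinAt θ
    (hasDerivAt_circleMap 0 r θ).hasDerivWithinAt fun t _ => circleMap_mem_cann hρ0 hr t

lemma hasDerivWithinAt_radial (hρ0 : 0 ≤ ρ) (hdiff : DifferentiableOn ℝ u (cann ρ))
    (hr : r ∈ Icc ρ 1) (θ : ℝ) :
    HasDerivWithinAt (fun s => u (circleMap 0 s θ)) (radialDeriv ρ u r θ) (Icc ρ 1) r :=
  ((hdiff _ (circleMap_mem_cann hρ0 hr θ)).hasFDerivWithinAt).comp_hasDerivWithinAt r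
    (hasDerivAt_circleMap_zero_radius r θ).hasDerivWithinAt
    (fun _ hs => circleMap_mem_cann hρ0 hs θ)

lemma wedge_radialDeriv_angularDeriv :
    wedge (radialDeriv ρ u r θ) (angularDeriv ρ u r θ) = r * jacobian ρ u (circleMap 0 r θ) := by
  rw [radialDeriv, angularDeriv, jacobian, wedge_map_map]
  congr 1
  simp only [wedge, circleMap_zero_re, circleMap_zero_im, mul_re, mul_im, I_re, I_im]
  linear_combination r * Real.cos_sq_add_sin_sq θ

lemma degCirc_eq_windingIntegral (hρ0 : 0 ≤ ρ) (hdiff : DifferentiableOn ℝ u (cann ρ))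
    (hr : r ∈ Icc ρ 1) : degCirc u r = windingIntegral ρ u r / (2 * π) := by
  rw [degCirc, windingIntegral, one_div, div_eq_inv_mul]
  congr 1
  refine integral_congr fun θ _ => ?_
  simp only [← (hasDerivAt_angular hρ0 hdiff hr θ).deriv, circleMap_zero, mul_comm I]

lemma continuous_comp_circleMap (hρ0 : 0 ≤ ρ) (hu : ContinuousOn u (cann ρ))
    (hr : r ∈ Icc ρ 1) : Continuous fun θ => u (circleMap 0 r θ) :=
  hu.comp_continuous (continuous_circleMap 0 r) (circleMap_mem_cann hρ0 hr)

lemma continuous_angularDeriv (hρ0 : 0 < ρ) (hρ1 : ρ < 1) (hreg : ContDiffOn ℝ 1 u (cann ρ))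
    (hr : r ∈ Icc ρ 1) : Continuous fun θ => angularDeriv ρ u r θ :=
  (continuousOn_angularDeriv hρ0 hρ1 hreg).comp_continuous (continuous_const.prodMk continuous_id)
    fun _ => ⟨hr, trivial⟩

/-- Integrating by parts in `θ` moves the angular derivative from one circle to the other, so the
difference involves only first derivatives of `u`. -/
lemma windingIntegral_sub (hρ0 : 0 < ρ) (hρ1 : ρ < 1) (hreg : ContDiffOn ℝ 1 u (cann ρ))
    (hr : r ∈ Icc ρ 1) (hs : s ∈ Icc ρ 1) :
    windingIntegral ρ u s - windingIntegral ρ u r = ∫ θ in 0..2 * π,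
      wedge (u (circleMap 0 s θ) - u (circleMap 0 r θ))
        (angularDeriv ρ u s θ + angularDeriv ρ u r θ) := by
  have hdiff := hreg.differentiableOn one_ne_zero
  have hUr := continuous_comp_circleMap hρ0.le hreg.continuousOn hr
  have hUs := continuous_comp_circleMap hρ0.le hreg.continuousOn hs
  have hVr := continuous_angularDeriv hρ0 hρ1 hreg hr
  have hVs := continuous_angularDeriv hρ0 hρ1 hreg hs
  set F' := fun θ => wedge (angularDeriv ρ u s θ) (u (circleMap 0 r θ)) +
    wedge (u (circleMap 0 s θ)) (angularDeriv ρ u r θ)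
  have hF' : Continuous F' := (hVs.wedge hUr).add (hUs.wedge hVr)
  have hparts : ∫ θ in 0..2 * π, F' θ = 0 := by
    have h2π (r : ℝ) : circleMap 0 r (2 * π) = circleMap 0 r 0 := by
      simpa using periodic_circleMap 0 r 0
    rw [integral_eq_sub_of_hasDerivAt (fun θ _ => (hasDerivAt_angular hρ0.le hdiff hs θ).wedge
      (hasDerivAt_angular hρ0.le hdiff hr θ)) (hF'.intervalIntegrable _ _), h2π, h2π, sub_self]
  calc windingIntegral ρ u s - windingIntegral ρ u r
      = ∫ θ in 0..2 * π, (wedge (u (circleMap 0 s θ)) (angularDeriv ρ u s θ) -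
          wedge (u (circleMap 0 r θ)) (angularDeriv ρ u r θ)) :=
        (integral_sub ((hUs.wedge hVs).intervalIntegrable _ _)
          ((hUr.wedge hVr).intervalIntegrable _ _)).symm
    _ = ∫ θ in 0..2 * π, (wedge (u (circleMap 0 s θ) - u (circleMap 0 r θ))
          (angularDeriv ρ u s θ + angularDeriv ρ u r θ) - F' θ) := by
        refine integral_congr fun θ _ => ?_
        simp only [F', wedge, sub_re, sub_im, add_re, add_im]
        ring
    _ = _ := by
        have hcont : Continuous fun θ => wedge (u (circleMap 0 s θ) - u (circleMap 0 r θ))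
            (angularDeriv ρ u s θ + angularDeriv ρ u r θ) := (hUs.sub hUr).wedge (hVs.add hVr)
        rw [integral_sub (hcont.intervalIntegrable _ _) (hF'.intervalIntegrable _ _), hparts,
          sub_zero]

lemma norm_slope_radial_le {M : ℝ} (hρ0 : 0 ≤ ρ) (hdiff : DifferentiableOn ℝ u (cann ρ))
    (hM : ∀ z ∈ cann ρ, ‖fderivWithin ℝ u (cann ρ) z‖ ≤ M) (hr : r ∈ Icc ρ 1)
    (hs : s ∈ Icc ρ 1) : ‖slope (fun s => u (circleMap 0 s θ)) r s‖ ≤ M := by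
  have hM0 : 0 ≤ M := (norm_nonneg _).trans (hM _ (circleMap_mem_cann hρ0 hr θ))
  rw [slope_def_module, norm_smul, norm_inv]
  exact inv_mul_le_of_le_mul₀ (norm_nonneg _) hM0
    ((convex_Icc ρ 1).norm_image_sub_le_of_norm_hasDerivWithin_le
      (fun x hx => hasDerivWithinAt_radial hρ0 hdiff hx θ)
      (fun x hx => norm_radialDeriv_le.trans (hM _ (circleMap_mem_cann hρ0 hx θ))) hr hs |>.trans_eq
      (mul_comm _ _))

lemma hasDerivWithinAt_windingIntegral (hρ0 : 0 < ρ) (hρ1 : ρ < 1)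
    (hreg : ContDiffOn ℝ 1 u (cann ρ)) (hr : r ∈ Icc ρ 1) :
    HasDerivWithinAt (windingIntegral ρ u)
      (2 * ∫ θ in 0..2 * π, r * jacobian ρ u (circleMap 0 r θ)) (Icc ρ 1) r := by
  have hdiff := hreg.differentiableOn one_ne_zero
  obtain ⟨M, hM⟩ := isCompact_cann.exists_bound_of_continuousOn
    (continuousOn_fderivWithin_cann hρ0 hρ1 hreg)
  have hM0 : 0 ≤ M := (norm_nonneg _).trans (hM _ (circleMap_mem_cann hρ0.le hr 0))
  have hV (s θ : ℝ) (hs : s ∈ Icc ρ 1) : ‖angularDeriv ρ u s θ‖ ≤ M :=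
    (norm_angularDeriv_le hρ0.le hs).trans (hM _ (circleMap_mem_cann hρ0.le hs θ))
  set l := 𝓝[Icc ρ 1 \ {r}] r
  have hslope : ∀ᶠ s in l, slope (windingIntegral ρ u) r s = ∫ θ in 0..2 * π,
      wedge (slope (fun s => u (circleMap 0 s θ)) r s)
        (angularDeriv ρ u s θ + angularDeriv ρ u r θ) := by
    filter_upwards [self_mem_nhdsWithin] with s hs
    rw [slope_def_module, windingIntegral_sub hρ0 hρ1 hreg hr hs.1,
      ← intervalIntegral.integral_smul]
    refine integral_congr fun θ _ => ?_
    simp only [slope_def_module, wedge, smul_re, smul_im, smul_eq_mul]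
    ring
  have hlim : 2 * ∫ θ in 0..2 * π, r * jacobian ρ u (circleMap 0 r θ) = ∫ θ in 0..2 * π,
      wedge (radialDeriv ρ u r θ) (angularDeriv ρ u r θ + angularDeriv ρ u r θ) := by
    rw [← intervalIntegral.integral_const_mul]
    refine integral_congr fun θ _ => ?_
    simp only [← wedge_radialDeriv_angularDeriv, wedge, add_re, add_im]
    ring
  rw [hasDerivWithinAt_iff_tendsto_slope, hlim, tendsto_congr' hslope]
  refine tendsto_integral_filter_of_dominated_convergence (fun _ => M * (M + M)) ?_ ?_
    intervalIntegrable_const ?_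
  · filter_upwards [self_mem_nhdsWithin] with s hs
    have hslope_cont : Continuous fun θ => slope (fun s => u (circleMap 0 s θ)) r s := by
      simp only [slope_def_module]
      exact ((continuous_comp_circleMap hρ0.le hreg.continuousOn hs.1).sub
        (continuous_comp_circleMap hρ0.le hreg.continuousOn hr)).const_smul _
    exact (hslope_cont.wedge ((continuous_angularDeriv hρ0 hρ1 hreg hs.1).add
      (continuous_angularDeriv hρ0 hρ1 hreg hr))).aestronglyMeasurable
  · filter_upwards [self_mem_nhdsWithin] with s hs
    refine Eventually.of_forall fun θ _ => (Real.norm_eq_abs _).trans_le ?_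
    exact (abs_wedge_le _ _).trans (mul_le_mul (norm_slope_radial_le hρ0.le hdiff hM hr hs.1)
      ((norm_add_le _ _).trans (add_le_add (hV s θ hs.1) (hV r θ hr))) (norm_nonneg _) hM0)
  · refine Eventually.of_forall fun θ _ => ?_
    have hVθ : ContinuousOn (fun s => angularDeriv ρ u s θ) (Icc ρ 1) :=
      (continuousOn_angularDeriv hρ0 hρ1 hreg).comp
        (continuous_id.prodMk continuous_const).continuousOn
        fun s hs => ⟨hs, trivial⟩
    exact (hasDerivWithinAt_iff_tendsto_slope.1 (hasDerivWithinAt_radial hρ0.le hdiff hr θ)).wedge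
      (((hVθ r hr).mono_left (nhdsWithin_mono _ sdiff_subset)).add tendsto_const_nhds)

lemma continuousOn_jacobian (hρ0 : 0 < ρ) (hρ1 : ρ < 1) (hreg : ContDiffOn ℝ 1 u (cann ρ)) :
    ContinuousOn (jacobian ρ u) (cann ρ) :=
  ((continuousOn_fderivWithin_cann hρ0 hρ1 hreg).clm_apply continuousOn_const).wedge
    ((continuousOn_fderivWithin_cann hρ0 hρ1 hreg).clm_apply continuousOn_const)

lemma windingIntegral_one_sub_windingIntegral (hρ0 : 0 < ρ) (hρ1 : ρ < 1)
    (hreg : ContDiffOn ℝ 1 u (cann ρ)) :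
    windingIntegral ρ u 1 - windingIntegral ρ u ρ =
      2 * ∫ r in ρ..1, ∫ θ in 0..2 * π, r * jacobian ρ u (circleMap 0 r θ) := by
  have hderiv (r : ℝ) (hr : r ∈ Icc ρ 1) := hasDerivWithinAt_windingIntegral hρ0 hρ1 hreg hr
  have hcont : ContinuousOn (fun r => 2 * ∫ θ in 0..2 * π, r * jacobian ρ u (circleMap 0 r θ))
      (Icc ρ 1) := by
    have h2 : ContinuousOn (fun p : ℝ × ℝ => p.1 * jacobian ρ u (circleMap 0 p.1 p.2))
        (Icc ρ 1 ×ˢ univ) :=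
      continuousOn_fst.mul ((continuousOn_jacobian hρ0 hρ1 hreg).comp_circleMap hρ0.le)
    refine continuousOn_const.mul (continuousOn_iff_continuous_domRestrict.2 ?_)
    exact continuous_parametric_intervalIntegral_of_continuous'
      (f := fun (r : Icc ρ 1) θ => (r : ℝ) * jacobian ρ u (circleMap 0 r θ))
      (h2.comp_continuous (f := fun p : Icc ρ 1 × ℝ => ((p.1 : ℝ), p.2)) (by fun_prop)
        fun p => ⟨p.1.2, trivial⟩) 0 (2 * π)
  rw [← intervalIntegral.integral_const_mul]
  exact (integral_eq_sub_of_hasDeriv_right_of_le hρ1.le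
    (fun r hr => (hderiv r hr).continuousWithinAt)
    (fun r hr => ((hderiv r (Ioo_subset_Icc_self hr)).hasDerivAt
      (Icc_mem_nhds hr.1 hr.2)).hasDerivWithinAt)
    (hcont.intervalIntegrable_of_Icc hρ1.le)).symm

theorem integral_jacobian_ann (hρ0 : 0 < ρ) (hρ1 : ρ < 1) (hreg : ContDiffOn ℝ 1 u (cann ρ)) :
    ∫ z in ann ρ, jacobian ρ u z = π * (degCirc u 1 - degCirc u ρ) := by
  have hdiff := hreg.differentiableOn one_ne_zero
  rw [setIntegral_ann_eq_integral_polar hρ0.le hρ1.le (continuousOn_jacobian hρ0 hρ1 hreg),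
    degCirc_eq_windingIntegral hρ0.le hdiff (right_mem_Icc.2 hρ1.le),
    degCirc_eq_windingIntegral hρ0.le hdiff (left_mem_Icc.2 hρ1.le), ← sub_div,
    windingIntegral_one_sub_windingIntegral hρ0 hρ1 hreg]
  field_simp

lemma energy_eq_integral_add_half_integral {f g : ℂ → ℝ} (hf : ContinuousOn f (cann ρ))
    (hg : ContinuousOn g (cann ρ)) (hfg : ∀ z, ‖fderivWithin ℝ u (cann ρ) z 1‖ ^ 2 +
      ‖fderivWithin ℝ u (cann ρ) z I‖ ^ 2 = 2 * f z + g z) :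
    energy ρ u = (∫ z in ann ρ, f z) + (∫ z in ann ρ, g z) / 2 := by
  have hpd : ∀ z ∈ ann ρ, ‖pdx u z‖ ^ 2 + ‖pdy u z‖ ^ 2 = 2 * f z + g z := fun z hz => by
    simpa only [pdx, pdy, fderivWithin_of_mem_nhds (cann_mem_nhds hz)] using hfg z
  have h2f : IntegrableOn (fun z => 2 * f z) (ann ρ) := (continuousOn_const.mul hf).integrableOn_ann
  rw [energy, setIntegral_congr_fun isOpen_ann.measurableSet hpd,
    integral_add h2f hg.integrableOn_ann,
    MeasureTheory.integral_const_mul]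
  ring

lemma energy_eq_integral_jacobian_add (hρ0 : 0 < ρ) (hρ1 : ρ < 1)
    (hreg : ContDiffOn ℝ 1 u (cann ρ)) : energy ρ u = (∫ z in ann ρ, jacobian ρ u z) +
      (∫ z in ann ρ,
        ‖fderivWithin ℝ u (cann ρ) z 1 + I * fderivWithin ℝ u (cann ρ) z I‖ ^ 2) / 2 :=
  have := continuousOn_fderivWithin_cann hρ0 hρ1 hreg
  energy_eq_integral_add_half_integral (continuousOn_jacobian hρ0 hρ1 hreg) (by fun_prop)
    fun z => by rw [sq_norm_add_sq_norm_eq_add_wedge, jacobian]; ring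

lemma energy_eq_neg_integral_jacobian_add (hρ0 : 0 < ρ) (hρ1 : ρ < 1)
    (hreg : ContDiffOn ℝ 1 u (cann ρ)) : energy ρ u = -(∫ z in ann ρ, jacobian ρ u z) +
      (∫ z in ann ρ,
        ‖fderivWithin ℝ u (cann ρ) z 1 - I * fderivWithin ℝ u (cann ρ) z I‖ ^ 2) / 2 := by
  have := continuousOn_fderivWithin_cann hρ0 hρ1 hreg
  rw [← MeasureTheory.integral_neg]
  exact energy_eq_integral_add_half_integral (continuousOn_jacobian hρ0 hρ1 hreg).neg (by fun_prop)
    fun z => by rw [sq_norm_add_sq_norm_eq_sub_wedge, jacobian]; ring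

lemma abs_integral_jacobian_le_energy (hρ0 : 0 < ρ) (hρ1 : ρ < 1)
    (hreg : ContDiffOn ℝ 1 u (cann ρ)) : |∫ z in ann ρ, jacobian ρ u z| ≤ energy ρ u := by
  have hP : 0 ≤ ∫ z in ann ρ,
      ‖fderivWithin ℝ u (cann ρ) z 1 + I * fderivWithin ℝ u (cann ρ) z I‖ ^ 2 :=
    setIntegral_nonneg isOpen_ann.measurableSet fun _ _ => sq_nonneg _
  have hM : 0 ≤ ∫ z in ann ρ,
      ‖fderivWithin ℝ u (cann ρ) z 1 - I * fderivWithin ℝ u (cann ρ) z I‖ ^ 2 :=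
    setIntegral_nonneg isOpen_ann.measurableSet fun _ _ => sq_nonneg _
  rw [abs_le]
  constructor
  · linarith [energy_eq_neg_integral_jacobian_add hρ0 hρ1 hreg]
  · linarith [energy_eq_integral_jacobian_add hρ0 hρ1 hreg]

lemma differentiableOn_ann_iff (hdiff : DifferentiableOn ℝ u (cann ρ)) :
    DifferentiableOn ℂ u (ann ρ) ↔
      ∀ z ∈ ann ρ, fderivWithin ℝ u (cann ρ) z 1 + I * fderivWithin ℝ u (cann ρ) z I = 0 := by
  have key : ∀ z ∈ ann ρ, DifferentiableAt ℂ u z ↔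
      fderivWithin ℝ u (cann ρ) z 1 + I * fderivWithin ℝ u (cann ρ) z I = 0 := by
    intro z hz
    rw [differentiableAt_complex_iff_differentiableAt_real,
      ← fderivWithin_of_mem_nhds (cann_mem_nhds hz), smul_eq_mul]
    simp only [(hdiff z (ann_subset_cann hz)).differentiableAt (cann_mem_nhds hz), true_and]
    constructor <;> intro h
    · linear_combination I * h + fderivWithin ℝ u (cann ρ) z 1 * I_sq
    · linear_combination (-I) * h + fderivWithin ℝ u (cann ρ) z I * I_sq
  exact ⟨fun h z hz => (key z hz).1 ((h z hz).differentiableAt (isOpen_ann.mem_nhds hz)),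
    fun h z hz => ((key z hz).2 (h z hz)).differentiableWithinAt⟩

lemma differentiableOn_ann_iff_integral_eq_zero (hρ0 : 0 < ρ) (hρ1 : ρ < 1)
    (hreg : ContDiffOn ℝ 1 u (cann ρ)) : DifferentiableOn ℂ u (ann ρ) ↔
      ∫ z in ann ρ,
        ‖fderivWithin ℝ u (cann ρ) z 1 + I * fderivWithin ℝ u (cann ρ) z I‖ ^ 2 = 0 := by
  have := continuousOn_fderivWithin_cann hρ0 hρ1 hreg
  have hc : ContinuousOn (fun z => ‖fderivWithin ℝ u (cann ρ) z 1 +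
      I * fderivWithin ℝ u (cann ρ) z I‖ ^ 2) (cann ρ) := by fun_prop
  rw [differentiableOn_ann_iff (hreg.differentiableOn one_ne_zero)]
  refine ⟨fun h => setIntegral_eq_zero_of_forall_eq_zero fun z hz => by simp [h z hz],
    fun h z hz => ?_⟩
  simpa using isOpen_ann.eqOn_zero_of_setIntegral_eq_zero (hc.mono ann_subset_cann)
    hc.integrableOn_ann (fun _ _ => sq_nonneg _) h hz

end ClosedAnnulus

theorem stmt4_general (ρ : ℝ) (hρ0 : 0 < ρ) (hρ1 : ρ < 1) (u : ℂ → ℂ)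
    (hreg : ContDiffOn ℝ 1 u (cann ρ))
    (p q : ℝ) (hp : p = degCirc u 1) (hq : q = degCirc u ρ) :
    energy ρ u ≥ Real.pi * |p - q| ∧
    (DifferentiableOn ℂ u (ann ρ) → energy ρ u = Real.pi * (p - q)) ∧
    (q ≤ p → energy ρ u = Real.pi * (p - q) → DifferentiableOn ℂ u (ann ρ)) := by
  have hJ : ∫ z in ann ρ, jacobian ρ u z = π * (p - q) := by
    rw [hp, hq, integral_jacobian_ann hρ0 hρ1 hreg]
  have hE := energy_eq_integral_jacobian_add hρ0 hρ1 hreg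
  have hhol := differentiableOn_ann_iff_integral_eq_zero hρ0 hρ1 hreg
  rw [hJ] at hE
  refine ⟨?_, fun h => ?_, fun _ heq => hhol.2 (by linarith)⟩
  · simpa [hJ, abs_mul, abs_of_pos Real.pi_pos] using abs_integral_jacobian_le_energy hρ0 hρ1 hreg
  · rw [hE, hhol.1 h]
    ring

/-- `E(u) ≥ π|p − q|`, holomorphic maps realize `E(u) = π(p − q)`, and conversely
equality (when `p ≥ q`) forces holomorphy. -/
theorem stmt4 (ρ : ℝ) (hρ0 : 0 < ρ) (hρ1 : ρ < 1) (u : ℂ → ℂ)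
    (hreg : ContDiffOn ℝ 1 u (cann ρ))
    (hmod : ∀ z ∈ bdry ρ, ‖u z‖ = 1)
    (p q : ℝ) (hp : p = degCirc u 1) (hq : q = degCirc u ρ) :
    energy ρ u ≥ Real.pi * |p - q| ∧
    (DifferentiableOn ℂ u (ann ρ) → energy ρ u = Real.pi * (p - q)) ∧
    (q ≤ p → energy ρ u = Real.pi * (p - q) → DifferentiableOn ℂ u (ann ρ)) :=
  stmt4_general ρ hρ0 hρ1 u hreg p q hp hq
end

section
/- Let 0 < ρ < 1, let p ≥ 1 be an integer and α ∈ ℂ with |α| = 1, and define ũ_p(z) = α(z^p − ρ^p·z̄^{−p})/(1 − ρ^p) for z ∈ Ā_ρ (so ũ_p(re^{iθ}) = α(r^p − ρ^p/r^p)e^{ipθ}/(1 − ρ^p)). Then Δũ_p = 0 on A_ρ, |ũ_p(z)| = 1 for all z ∈ ∂A_ρ, ũ_p(z) ∧ ∂_r ũ_p(z) = 0 for all z ∈ ∂A_ρ, and E(ũ_p) = 2πp(1 + ρ^p)/(1 − ρ^p), which is strictly greater than E(u_p) = 2πp(1 − ρ^p)/(1 + ρ^p), where u_p(z) = α(z^p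 + ρ^p·z̄^{−p})/(1 + ρ^p). -/
open Complex MeasureTheory

/-! Both maps have the form `z ↦ a z^n + b z̄^m`, the sum of a holomorphic and an antiholomorphic
function, hence harmonic away from `0`. Its energy density is
`2 (n² |a|² |z|^{2n-2} + m² |b|² |z|^{2m-2})`, which integrates in polar coordinates to
`π (n |a|² (1 - ρ^{2n}) + m |b|² (1 - ρ^{2m}))`. For `m = -p` one has `z̄^{-p} = z^p / |z|^{2p}`, so
when `a, b ∈ α ℝ` both the map and its radial derivative are real multiples of `α z^p`: their wedge
vanishes identically, and the modulus on `|z| = r` is `|a/α + b/(α r^{2p})| r^p`. -/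

open Set Filter Topology ComplexConjugate Real

noncomputable def powConjPow (a b : ℂ) (n m : ℤ) (z : ℂ) : ℂ := a * z ^ n + b * conj z ^ m

section

variable (a b : ℂ) (n m : ℤ) {z : ℂ}

theorem hasFDerivAt_powConjPow (hz : z ≠ 0) :
    HasFDerivAt (powConjPow a b n m)
      ((a * n * z ^ (n - 1)) • ContinuousLinearMap.id ℝ ℂ
        + (b * m * conj z ^ (m - 1)) • conjCLE.toContinuousLinearMap) z := by
  have hhol := ((hasDerivAt_zpow n z (.inl hz)).const_mul a).hasFDerivAt.restrictScalars ℝ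
  have hanti := (((hasDerivAt_zpow m (conj z) (.inl (by simpa using hz))).const_mul b
    ).hasFDerivAt.restrictScalars ℝ).comp z conjCLE.hasFDerivAt
  refine (hhol.add hanti).congr_fderiv ?_
  ext v
  simp only [add_apply, ContinuousLinearMap.coe_restrictScalars',
    ContinuousLinearMap.toSpanSingleton_apply, smul_eq_mul, ContinuousLinearMap.comp_apply,
    ContinuousLinearEquiv.coe_coe, ContinuousAlgEquiv.coeCLE_apply, conjCAE_apply, smul_apply,
    ContinuousLinearMap.id_apply]
  ring

theorem fderiv_powConjPow_apply (hz : z ≠ 0) (v : ℂ) :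
    fderiv ℝ (powConjPow a b n m) z v
      = a * n * z ^ (n - 1) * v + b * m * conj z ^ (m - 1) * conj v := by
  simp [(hasFDerivAt_powConjPow a b n m hz).fderiv]

theorem pdx_powConjPow (hz : z ≠ 0) :
    pdx (powConjPow a b n m) z = powConjPow (a * n) (b * m) (n - 1) (m - 1) z := by
  simp [pdx, fderiv_powConjPow_apply a b n m hz, powConjPow]

theorem pdy_powConjPow (hz : z ≠ 0) :
    pdy (powConjPow a b n m) z = powConjPow (a * n * I) (-(b * m * I)) (n - 1) (m - 1) z := by
  simp only [pdy, fderiv_powConjPow_apply a b n m hz, conj_I, mul_neg, powConjPow, neg_mul]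
  ring

theorem pdx_powConjPow_eventuallyEq (hz : z ≠ 0) :
    pdx (powConjPow a b n m) =ᶠ[𝓝 z] powConjPow (a * n) (b * m) (n - 1) (m - 1) :=
  eventually_of_mem (isOpen_ne.mem_nhds hz) fun _ hw ↦ pdx_powConjPow a b n m hw

theorem pdy_powConjPow_eventuallyEq (hz : z ≠ 0) :
    pdy (powConjPow a b n m) =ᶠ[𝓝 z] powConjPow (a * n * I) (-(b * m * I)) (n - 1) (m - 1) :=
  eventually_of_mem (isOpen_ne.mem_nhds hz) fun _ hw ↦ pdy_powConjPow a b n m hw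

theorem laplacian_powConjPow (hz : z ≠ 0) :
    pdx (pdx (powConjPow a b n m)) z + pdy (pdy (powConjPow a b n m)) z = 0 := by
  have hxx : pdx (pdx (powConjPow a b n m)) z
      = pdx (powConjPow (a * n) (b * m) (n - 1) (m - 1)) z :=
    congrArg (fun L : ℂ →L[ℝ] ℂ ↦ L 1) (pdx_powConjPow_eventuallyEq a b n m hz).fderiv_eq
  have hyy : pdy (pdy (powConjPow a b n m)) z
      = pdy (powConjPow (a * n * I) (-(b * m * I)) (n - 1) (m - 1)) z :=
    congrArg (fun L : ℂ →L[ℝ] ℂ ↦ L I) (pdy_powConjPow_eventuallyEq a b n m hz).fderiv_eq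
  rw [hxx, hyy, pdx_powConjPow _ _ _ _ hz, pdy_powConjPow _ _ _ _ hz]
  simp only [powConjPow]
  push_cast
  linear_combination
    (a * n * (n - 1) * z ^ (n - 1 - 1) + b * m * (m - 1) * conj z ^ (m - 1 - 1)) * I_sq

theorem rderiv_powConjPow (hz : z ≠ 0) :
    rderiv (powConjPow a b n m) z = (a * n * z ^ n + b * m * conj z ^ m) / (‖z‖ : ℂ) := by
  have hconj : conj z ≠ 0 := (map_ne_zero _).mpr hz
  rw [rderiv, fderiv_powConjPow_apply a b n m hz, map_div₀, Complex.conj_ofReal,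
    zpow_sub_one₀ hz, zpow_sub_one₀ hconj]
  field_simp

end

theorem measurableSet_ann (ρ : ℝ) : MeasurableSet (ann ρ) :=
  measurableSet_Ioo.preimage continuous_norm.measurable

theorem ne_zero_of_mem_ann {ρ : ℝ} (hρ : 0 ≤ ρ) {z : ℂ} (hz : z ∈ ann ρ) : z ≠ 0 :=
  norm_pos_iff.mp (hρ.trans_lt hz.1)

theorem ne_zero_of_mem_bdry {ρ : ℝ} (hρ : 0 < ρ) {z : ℂ} (hz : z ∈ bdry ρ) : z ≠ 0 :=
  norm_ne_zero_iff.mp (by rcases hz with h | h <;> simp [h, hρ.ne'])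

theorem setIntegral_ann_fun_norm {ρ : ℝ} (hρ : 0 ≤ ρ) (g : ℝ → ℝ) :
    ∫ z in ann ρ, g ‖z‖ = 2 * π * ∫ r in Ioo ρ 1, r * g r := by
  have hvol : volume.real (Metric.ball (0 : ℂ) 1) = π := by
    simp [measureReal_def, Complex.volume_ball]
  have hIoi : Ioi 0 ∩ Ioo ρ 1 = Ioo ρ 1 := inter_eq_right.mpr fun r hr ↦ hρ.trans_lt hr.1
  rw [← integral_indicator (measurableSet_ann ρ)]
  change ∫ z : ℂ, (Ioo ρ 1).indicator g ‖z‖ = _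
  rw [integral_fun_norm_addHaar, Complex.finrank_real_complex, hvol]
  have hind : (fun r ↦ r * (Ioo ρ 1).indicator g r) = (Ioo ρ 1).indicator fun r ↦ r * g r :=
    funext fun r ↦ (indicator_mul_right _ (fun r ↦ r) g).symm
  simp only [nsmul_eq_mul, smul_eq_mul, Nat.add_one_sub_one, pow_one]
  rw [hind, setIntegral_indicator measurableSet_Ioo, hIoi]
  push_cast
  ring

theorem sq_norm_zpow_sub_one (z : ℂ) (n : ℤ) : ‖z ^ (n - 1)‖ ^ 2 = ‖z‖ ^ (2 * n - 2) := by
  rw [norm_zpow, ← zpow_natCast, ← zpow_mul]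
  congr 1
  push_cast
  ring

theorem sq_norm_pdx_add_sq_norm_pdy_powConjPow (a b : ℂ) (n m : ℤ) {z : ℂ} (hz : z ≠ 0) :
    ‖pdx (powConjPow a b n m) z‖ ^ 2 + ‖pdy (powConjPow a b n m) z‖ ^ 2
      = 2 * (‖a‖ ^ 2 * n ^ 2 * ‖z‖ ^ (2 * n - 2) + ‖b‖ ^ 2 * m ^ 2 * ‖z‖ ^ (2 * m - 2)) := by
  set A := a * n * z ^ (n - 1)
  set B := b * m * conj z ^ (m - 1)
  have hx : pdx (powConjPow a b n m) z = A + B := pdx_powConjPow a b n m hz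
  have hy : pdy (powConjPow a b n m) z = (A - B) * I := by
    rw [pdy_powConjPow a b n m hz, powConjPow]
    ring
  have hA : ‖A‖ ^ 2 = ‖a‖ ^ 2 * n ^ 2 * ‖z‖ ^ (2 * n - 2) := by
    simp only [A, norm_mul, mul_pow, sq_norm_zpow_sub_one, norm_intCast, sq_abs]
  have hB : ‖B‖ ^ 2 = ‖b‖ ^ 2 * m ^ 2 * ‖z‖ ^ (2 * m - 2) := by
    simp only [B, norm_mul, mul_pow, sq_norm_zpow_sub_one, norm_intCast, sq_abs, Complex.norm_conj]
  rw [hx, hy, norm_mul, Complex.norm_I, mul_one, ← hA, ← hB]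
  linear_combination parallelogram_law_with_norm ℝ A B

theorem integral_sq_mul_zpow_two_mul_sub_one (n : ℤ) {ρ : ℝ} (hρ : 0 < ρ) :
    ∫ r in ρ..1, (n : ℝ) ^ 2 * r ^ (2 * n - 1) = n * (1 - ρ ^ (2 * n)) / 2 := by
  rcases eq_or_ne n 0 with rfl | hn
  · simp
  have h0 : (0 : ℝ) ∉ uIcc ρ 1 := notMem_uIcc_of_lt hρ one_pos
  have hexp : 2 * n - 1 + 1 = 2 * n := by ring
  rw [intervalIntegral.integral_const_mul, integral_zpow (.inr ⟨by omega, h0⟩), hexp, one_zpow]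
  push_cast
  field_simp
  ring

theorem energy_powConjPow (a b : ℂ) (n m : ℤ) {ρ : ℝ} (hρ : 0 < ρ) (hρ1 : ρ ≤ 1) :
    energy ρ (powConjPow a b n m)
      = π * (‖a‖ ^ 2 * n * (1 - ρ ^ (2 * n)) + ‖b‖ ^ 2 * m * (1 - ρ ^ (2 * m))) := by
  set g : ℝ → ℝ := fun r ↦
    2 * (‖a‖ ^ 2 * n ^ 2 * r ^ (2 * n - 2) + ‖b‖ ^ 2 * m ^ 2 * r ^ (2 * m - 2))
  have hdensity : ∀ z ∈ ann ρ,
      ‖pdx (powConjPow a b n m) z‖ ^ 2 + ‖pdy (powConjPow a b n m) z‖ ^ 2 = g ‖z‖ :=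
    fun z hz ↦ sq_norm_pdx_add_sq_norm_pdy_powConjPow a b n m (ne_zero_of_mem_ann hρ.le hz)
  have hradial : EqOn (fun r ↦ r * g r) (fun r ↦ 2 * (‖a‖ ^ 2 * ((n : ℝ) ^ 2 * r ^ (2 * n - 1))
      + ‖b‖ ^ 2 * ((m : ℝ) ^ 2 * r ^ (2 * m - 1)))) (uIcc ρ 1) := by
    intro r hr
    have hr0 : r ≠ 0 := (hρ.trans_le (uIcc_of_le hρ1 ▸ hr).1).ne'
    simp only [g, show 2 * n - 1 = 2 * n - 2 + 1 by ring, show 2 * m - 1 = 2 * m - 2 + 1 by ring,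
      zpow_add_one₀ hr0]
    ring
  have hint : ∀ k : ℤ, IntervalIntegrable (fun r : ℝ ↦ (k : ℝ) ^ 2 * r ^ (2 * k - 1)) volume ρ 1 :=
    fun k ↦ ((intervalIntegral.intervalIntegrable_zpow
      (.inr (notMem_uIcc_of_lt hρ one_pos))).const_mul _)
  rw [energy, setIntegral_congr_fun (measurableSet_ann ρ) hdensity, setIntegral_ann_fun_norm hρ.le,
    ← integral_Ioc_eq_integral_Ioo, ← intervalIntegral.integral_of_le hρ1,
    intervalIntegral.integral_congr hradial, intervalIntegral.integral_const_mul,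
    intervalIntegral.integral_add ((hint n).const_mul _) ((hint m).const_mul _),
    intervalIntegral.integral_const_mul (‖a‖ ^ 2), intervalIntegral.integral_const_mul (‖b‖ ^ 2),
    integral_sq_mul_zpow_two_mul_sub_one n hρ, integral_sq_mul_zpow_two_mul_sub_one m hρ]
  ring

theorem conj_zpow_neg_natCast {z : ℂ} (hz : z ≠ 0) (p : ℕ) :
    conj z ^ (-(p : ℤ)) = z ^ p / ((‖z‖ ^ (2 * p) : ℝ) : ℂ) := by
  have hconj : conj z = ((‖z‖ ^ 2 : ℝ) : ℂ) / z := by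
    rw [eq_div_iff hz, mul_comm, Complex.mul_conj, Complex.normSq_eq_norm_sq]
  rw [hconj, zpow_neg, div_zpow, zpow_natCast, zpow_natCast, inv_div, pow_mul]
  push_cast
  ring

theorem wedge_ofReal_mul (x y : ℝ) (c : ℂ) : wedge (x * c) (y * c) = 0 := by
  simp only [wedge, Complex.mul_re, Complex.mul_im, Complex.ofReal_re, Complex.ofReal_im]
  ring

section

variable (α : ℂ) (s t : ℝ) (p : ℕ) {z : ℂ}

theorem powConjPow_ofReal_eq (hz : z ≠ 0) :
    powConjPow (α * s) (α * t) p (-p) z = ((s + t / ‖z‖ ^ (2 * p) : ℝ) : ℂ) * (α * z ^ p) := by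
  rw [powConjPow, conj_zpow_neg_natCast hz, zpow_natCast]
  push_cast
  ring

theorem rderiv_powConjPow_ofReal_eq (hz : z ≠ 0) :
    rderiv (powConjPow (α * s) (α * t) p (-p)) z
      = ((p * (s - t / ‖z‖ ^ (2 * p)) / ‖z‖ : ℝ) : ℂ) * (α * z ^ p) := by
  rw [rderiv_powConjPow _ _ _ _ hz, conj_zpow_neg_natCast hz, zpow_natCast]
  push_cast
  ring

theorem wedge_powConjPow_ofReal_rderiv (hz : z ≠ 0) :
    wedge (powConjPow (α * s) (α * t) p (-p) z) (rderiv (powConjPow (α * s) (α * t) p (-p)) z)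
      = 0 := by
  rw [powConjPow_ofReal_eq α s t p hz, rderiv_powConjPow_ofReal_eq α s t p hz]
  exact wedge_ofReal_mul _ _ _

theorem norm_powConjPow_ofReal (hα : ‖α‖ = 1) (hz : z ≠ 0) :
    ‖powConjPow (α * s) (α * t) p (-p) z‖ = |s + t / ‖z‖ ^ (2 * p)| * ‖z‖ ^ p := by
  rw [powConjPow_ofReal_eq α s t p hz, norm_mul, norm_mul, hα, one_mul, Complex.norm_real,
    Real.norm_eq_abs, norm_pow]

end

/-- `α (z^p + σ z̄^{-p}) / (1 + σ)`: `σ = -ρ^p` gives `ũ_p` and `σ = ρ^p` gives `u_p`. -/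
noncomputable def normalizedPowConjPow (α : ℂ) (σ : ℝ) (p : ℕ) : ℂ → ℂ :=
  powConjPow (α * ((1 + σ)⁻¹ : ℝ)) (α * (σ / (1 + σ) : ℝ)) p (-p)

section

variable {α : ℂ} {σ ρ : ℝ} {p : ℕ}

theorem normalizedPowConjPow_eq (hσ1 : 1 + σ ≠ 0) :
    normalizedPowConjPow α σ p = fun z ↦ α * (z ^ p + σ * conj z ^ (-(p : ℤ))) / (1 + σ) := by
  have : (1 : ℂ) + σ ≠ 0 := by exact_mod_cast hσ1
  funext z
  simp only [normalizedPowConjPow, powConjPow, zpow_natCast]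
  push_cast
  field_simp

theorem energy_normalizedPowConjPow (hα : ‖α‖ = 1) (hρ : 0 < ρ) (hρ1 : ρ ≤ 1)
    (hσ : σ ^ 2 = ρ ^ (2 * p)) (hσ1 : 1 + σ ≠ 0) :
    energy ρ (normalizedPowConjPow α σ p) = 2 * π * p * (1 - σ) / (1 + σ) := by
  have hρp : ρ ^ (2 * p) ≠ 0 := by positivity
  rw [normalizedPowConjPow, energy_powConjPow _ _ _ _ hρ hρ1]
  simp only [norm_mul, hα, one_mul, Complex.norm_real, Real.norm_eq_abs, sq_abs]
  rw [mul_neg, show (2 : ℤ) * (p : ℤ) = ((2 * p : ℕ) : ℤ) by push_cast; ring, zpow_neg,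
    zpow_natCast]
  push_cast
  field_simp
  linear_combination (p : ℝ) * (ρ ^ (2 * p) + 1) * hσ

theorem norm_normalizedPowConjPow_of_mem_bdry (hα : ‖α‖ = 1) (hρ : 0 < ρ)
    (hσ : σ ^ 2 = ρ ^ (2 * p)) (hσ1 : 1 + σ ≠ 0) {z : ℂ} (hz : z ∈ bdry ρ) :
    ‖normalizedPowConjPow α σ p z‖ = 1 := by
  rw [normalizedPowConjPow, norm_powConjPow_ofReal α _ _ p hα (ne_zero_of_mem_bdry hρ hz)]
  rcases hz with hz | hz
  · rw [hz, one_pow, one_pow, div_one, mul_one, inv_eq_one_div, ← add_div, div_self hσ1, abs_one]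
  · have habs : |σ| = ρ ^ p := by
      rw [← pow_left_inj₀ (abs_nonneg σ) (by positivity) two_ne_zero, sq_abs, hσ, pow_mul']
    have hσ0 : σ ≠ 0 := abs_pos.mp (habs ▸ pow_pos hρ p)
    rw [hz, ← hσ, show (1 + σ)⁻¹ + σ / (1 + σ) / σ ^ 2 = σ⁻¹ by field_simp; ring, abs_inv, habs,
      inv_mul_cancel₀ (by positivity)]

end

/-- The radial map `ũ_p(z) = α(z^p − ρ^p z̄^{−p})/(1 − ρ^p)` is a solution of the semi-stiff
problem, with `E(ũ_p) = 2πp(1 + ρ^p)/(1 − ρ^p) > E(u_p) = 2πp(1 − ρ^p)/(1 + ρ^p)`. -/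
theorem stmt10 (ρ : ℝ) (hρ0 : 0 < ρ) (hρ1 : ρ < 1)
    (p : ℕ) (hp : 1 ≤ p) (α : ℂ) (hα : ‖α‖ = 1)
    (utild up : ℂ → ℂ)
    (hut : utild = fun z =>
      α * (z ^ p - (ρ : ℂ) ^ p * ((starRingEnd ℂ) z) ^ (-(p : ℤ))) / (1 - (ρ : ℂ) ^ p))
    (hup : up = fun z =>
      α * (z ^ p + (ρ : ℂ) ^ p * ((starRingEnd ℂ) z) ^ (-(p : ℤ))) / (1 + (ρ : ℂ) ^ p)) :
    (∀ z ∈ ann ρ, pdx (pdx utild) z + pdy (pdy utild) z = 0) ∧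
    (∀ z ∈ bdry ρ, ‖utild z‖ = 1) ∧
    (∀ z ∈ bdry ρ, wedge (utild z) (rderiv utild z) = 0) ∧
    energy ρ utild = 2 * Real.pi * (p : ℝ) * (1 + ρ ^ p) / (1 - ρ ^ p) ∧
    energy ρ up = 2 * Real.pi * (p : ℝ) * (1 - ρ ^ p) / (1 + ρ ^ p) ∧
    energy ρ utild > energy ρ up := by
  have hq0 : 0 < ρ ^ p := pow_pos hρ0 p
  have hq1 : ρ ^ p < 1 := pow_lt_one₀ hρ0.le hρ1 (by omega)
  have hsq : (ρ ^ p) ^ 2 = ρ ^ (2 * p) := by ring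
  have hsq' : (-ρ ^ p) ^ 2 = ρ ^ (2 * p) := by ring
  have hut1 : 1 + -ρ ^ p ≠ 0 := by linarith
  have hup1 : 1 + ρ ^ p ≠ 0 := by linarith
  have hut' : utild = normalizedPowConjPow α (-ρ ^ p) p := by
    rw [hut, normalizedPowConjPow_eq hut1]
    push_cast
    simp only [← sub_eq_add_neg, neg_mul]
  have hup' : up = normalizedPowConjPow α (ρ ^ p) p := by
    rw [hup, normalizedPowConjPow_eq hup1]
    push_cast
    rfl
  have hEt : energy ρ utild = 2 * π * p * (1 + ρ ^ p) / (1 - ρ ^ p) := by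
    rw [hut', energy_normalizedPowConjPow hα hρ0 hρ1.le hsq' hut1, sub_neg_eq_add, ← sub_eq_add_neg]
  have hEu : energy ρ up = 2 * π * p * (1 - ρ ^ p) / (1 + ρ ^ p) :=
    hup' ▸ energy_normalizedPowConjPow hα hρ0 hρ1.le hsq hup1
  refine ⟨fun z hz ↦ ?_, fun z hz ↦ ?_, fun z hz ↦ ?_, hEt, hEu, ?_⟩
  · exact hut' ▸ laplacian_powConjPow _ _ _ _ (ne_zero_of_mem_ann hρ0.le hz)
  · exact hut' ▸ norm_normalizedPowConjPow_of_mem_bdry hα hρ0 hsq' hut1 hz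
  · exact hut' ▸ wedge_powConjPow_ofReal_rderiv _ _ _ _ (ne_zero_of_mem_bdry hρ0 hz)
  · have hp0 : (0 : ℝ) < p := by exact_mod_cast hp
    rw [hEt, hEu, gt_iff_lt, div_lt_div_iff₀ (by linarith) (by linarith)]
    nlinarith [mul_pos (mul_pos pi_pos hp0) hq0]
end
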